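/- arXiv:1311.4468 — 2 statements merged into one kernel-verified Lean document; each statement's English description precedes it below -/
import Mathlib

section
/- Let w₁, w₂ be positive real numbers and let A be the 2×2 real matrix with rows (0, 1) and (−w₁, −w₂). Then the matrix exponential exp(t • A) tends to the zero matrix as t → ∞. -/
/-!
Over `ℂ` the characteristic polynomial `X² + w₂ X + w₁` of `A` splits as `(X - l₁)(X - l₂)`, and
positivity of `w₁, w₂` forces `Re lᵢ < 0`. If `l₁ ≠ l₂`, then `A` is conjugate to
`diag(l₁, l₂)` and `exp (t • A)` is a combination of `e^{t l₁}` and `e^{t l₂}`; if `l₁ = l₂ = l`,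
then `(A - l)² = 0` and `exp (t • A) = e^{t l} (1 + t (A - l))`. Either way it tends to zero, and
the real matrix exponential is the real part of the complex one.
-/

attribute [local instance] Matrix.linftyOpNormedRing Matrix.linftyOpNormedAlgebra

open Matrix

open Filter Topology NormedSpace

theorem NormedSpace.exp_eq_one_add_of_mul_self_eq_zero {𝔸 : Type*} [Ring 𝔸] [Algebra ℚ 𝔸]
    [TopologicalSpace 𝔸] [IsTopologicalRing 𝔸] {N : 𝔸} (hN : N * N = 0) : exp N = 1 + N := by
  rw [exp_eq_tsum_rat]
  dsimp only
  rw [tsum_eq_sum (s := Finset.range 2)]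
  · simp [Finset.sum_range_succ]
  · intro n hn
    obtain ⟨k, rfl⟩ := Nat.exists_eq_add_of_le (not_lt.1 (Finset.mem_range.not.1 hn))
    rw [pow_add, sq, hN, zero_mul, smul_zero]

namespace Complex

theorem tendsto_exp_ofReal_mul_atTop_nhds_zero {c : ℂ} (hc : c.re < 0) :
    Tendsto (fun t : ℝ => exp (t * c)) atTop (𝓝 0) := by
  rw [tendsto_exp_nhds_zero_iff]
  simpa using tendsto_id.atTop_mul_const_of_neg hc

theorem tendsto_ofReal_mul_exp_ofReal_mul_atTop_nhds_zero {c : ℂ} (hc : c.re < 0) :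
    Tendsto (fun t : ℝ => t * exp (t * c)) atTop (𝓝 0) := by
  rw [tendsto_zero_iff_norm_tendsto_zero]
  refine (isLittleO_pow_exp_pos_mul_atTop 1 (neg_pos.2 hc)).tendsto_div_nhds_zero.congr' ?_
  filter_upwards [eventually_ge_atTop 0] with t ht
  rw [norm_mul, norm_exp, norm_real, Real.norm_of_nonneg ht, pow_one, div_eq_mul_inv,
    ← Real.exp_neg]
  simp [mul_comm]

/-- The Routh–Hurwitz criterion in degree two. -/
theorem re_neg_of_sq_add_mul_add_eq_zero {b c : ℝ} (hb : 0 < b) (hc : 0 < c) {z : ℂ}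
    (hz : z ^ 2 + b * z + c = 0) : z.re < 0 := by
  have hre := congrArg re hz
  have him := congrArg im hz
  simp only [sq, add_re, mul_re, ofReal_re, ofReal_im, add_im, mul_im, zero_re, zero_im] at hre him
  rcases eq_or_ne z.im 0 with h | h
  · rw [h] at hre
    nlinarith
  · have : 2 * z.re + b = 0 := mul_left_cancel₀ h (by linarith)
    linarith

end Complex

namespace Matrix

variable {n 𝕜 : Type*} [Fintype n] [DecidableEq n] [RCLike 𝕜]

def IsAsymptoticallyStable (B : Matrix n n 𝕜) : Prop :=
  Tendsto (fun t : ℝ => exp (t • B)) atTop (𝓝 0)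

theorem isAsymptoticallyStable_diagonal {d : n → ℂ} (hd : ∀ i, (d i).re < 0) :
    (diagonal d).IsAsymptoticallyStable := by
  have hsmul (t : ℝ) : t • diagonal d = diagonal fun i => (t : ℂ) * d i := by
    ext i j
    by_cases h : i = j <;> simp [h, Complex.real_smul]
  simp only [IsAsymptoticallyStable, hsmul, exp_diagonal, ← diagonal_zero]
  refine (continuous_id.matrix_diagonal.tendsto _).comp (tendsto_pi_nhds.2 fun i => ?_)
  simpa [Pi.exp_def, ← Complex.exp_eq_exp_ℂ] using
    Complex.tendsto_exp_ofReal_mul_atTop_nhds_zero (hd i)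

theorem IsAsymptoticallyStable.conj {P B : Matrix n n 𝕜} (hP : IsUnit P)
    (hB : B.IsAsymptoticallyStable) : (P * B * P⁻¹).IsAsymptoticallyStable := by
  have hconj (t : ℝ) : exp (t • (P * B * P⁻¹)) = P * exp (t • B) * P⁻¹ := by
    rw [← exp_conj _ _ hP, Matrix.mul_smul, Matrix.smul_mul]
  simpa [IsAsymptoticallyStable, hconj] using (hB.const_mul P).mul_const P⁻¹

theorem exp_smul_eq_of_sub_mul_self_eq_zero {B : Matrix n n ℂ} {l : ℂ}
    (hN : (B - l • 1) * (B - l • 1) = 0) (t : ℝ) :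
    exp (t • B) = Complex.exp (t * l) • (1 + (t : ℂ) • (B - l • 1)) := by
  have hsplit : t • B = algebraMap ℂ _ (t * l) + (t : ℂ) • (B - l • 1) := by
    rw [Algebra.algebraMap_eq_smul_one, smul_sub, ← add_sub_assoc, mul_smul, add_sub_cancel_left,
      Complex.coe_smul]
  have hsq : ((t : ℂ) • (B - l • 1)) * ((t : ℂ) • (B - l • 1)) = 0 := by
    rw [smul_mul_smul_comm, hN, smul_zero]
  rw [hsplit, exp_add_of_commute _ _ (Algebra.commute_algebraMap_left _ _),
    exp_eq_one_add_of_mul_self_eq_zero hsq, algebraMap_eq_diagonal, exp_diagonal,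
    ← algebraMap_exp_comm, ← algebraMap_eq_diagonal, ← Algebra.smul_def, Complex.exp_eq_exp_ℂ]

theorem isAsymptoticallyStable_of_sub_mul_self_eq_zero {B : Matrix n n ℂ} {l : ℂ}
    (hl : l.re < 0) (hN : (B - l • 1) * (B - l • 1) = 0) : B.IsAsymptoticallyStable := by
  simp only [IsAsymptoticallyStable, exp_smul_eq_of_sub_mul_self_eq_zero hN, smul_add, smul_smul]
  simpa [mul_comm] using
    ((Complex.tendsto_exp_ofReal_mul_atTop_nhds_zero hl).smul_const 1).add
      ((Complex.tendsto_ofReal_mul_exp_ofReal_mul_atTop_nhds_zero hl).smul_const (B - l • 1))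

theorem IsAsymptoticallyStable.of_map_ofReal {A : Matrix n n ℝ}
    (h : (A.map ((↑) : ℝ → ℂ)).IsAsymptoticallyStable) : A.IsAsymptoticallyStable := by
  have hmap (t : ℝ) : (exp (t • A)).map ((↑) : ℝ → ℂ) = exp (t • A.map ((↑) : ℝ → ℂ)) := by
    have hsmul : (t • A).map ((↑) : ℝ → ℂ) = t • A.map ((↑) : ℝ → ℂ) := by
      ext i j
      simp
    rw [← hsmul]
    exact map_exp (Complex.ofRealHom.mapMatrix (m := n))
      (continuous_id.matrix_map Complex.continuous_ofReal) (t • A)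
  have hre (t : ℝ) : exp (t • A) = (exp (t • A.map ((↑) : ℝ → ℂ))).map Complex.re := by
    rw [← hmap]
    ext i j
    simp
  simpa [IsAsymptoticallyStable, hre, Function.comp_def] using
    ((continuous_id.matrix_map Complex.continuous_re).tendsto 0).comp h

end Matrix

/-- The columns `(1, lᵢ)` are eigenvectors. -/
theorem companion_eq_conj_diagonal {l₁ l₂ : ℂ} (h : l₁ ≠ l₂) :
    !![0, 1; -(l₁ * l₂), l₁ + l₂] =
      !![1, 1; l₁, l₂] * diagonal ![l₁, l₂] * !![1, 1; l₁, l₂]⁻¹ := by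
  have hdet : IsUnit (!![1, 1; l₁, l₂] : Matrix (Fin 2) (Fin 2) ℂ).det := by
    simpa [det_fin_two_of, sub_eq_zero] using h.symm
  refine (mul_nonsing_inv_cancel_right _ _ hdet).symm.trans ?_
  congr 1
  ext i j
  fin_cases i <;> fin_cases j <;> simp [mul_apply, Fin.sum_univ_two] <;> ring

theorem isAsymptoticallyStable_companion {l₁ l₂ : ℂ} (h₁ : l₁.re < 0) (h₂ : l₂.re < 0) :
    (!![0, 1; -(l₁ * l₂), l₁ + l₂] : Matrix (Fin 2) (Fin 2) ℂ).IsAsymptoticallyStable := by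
  rcases eq_or_ne l₁ l₂ with rfl | hne
  · refine isAsymptoticallyStable_of_sub_mul_self_eq_zero h₁ ?_
    ext i j
    fin_cases i <;> fin_cases j <;> simp [mul_apply, Fin.sum_univ_two, one_apply, mul_assoc]
  · rw [companion_eq_conj_diagonal hne]
    refine (isAsymptoticallyStable_diagonal (Fin.forall_fin_two.2 ⟨h₁, h₂⟩)).conj ?_
    simpa [isUnit_iff_isUnit_det, det_fin_two_of, sub_eq_zero] using hne.symm

/-- For gains `w₁, w₂ > 0`, the matrix exponential of the companion matrix
`A = [[0, 1], [−w₁, −w₂]]` of the proportionally controlled double integrator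
tends to zero: `exp (t • A) → 0` as `t → ∞`. -/
theorem matrix_exp_companion_tendsto_zero
    (w₁ w₂ : ℝ) (hw₁ : 0 < w₁) (hw₂ : 0 < w₂)
    (A : Matrix (Fin 2) (Fin 2) ℝ) (hA : A = !![0, 1; -w₁, -w₂]) :
    Filter.Tendsto (fun t : ℝ => NormedSpace.exp (t • A))
      Filter.atTop (nhds 0) := by
  obtain ⟨d, hd⟩ := IsAlgClosed.exists_eq_mul_self ((w₂ : ℂ) ^ 2 - 4 * w₁)
  set l₁ : ℂ := (-w₂ + d) / 2
  set l₂ : ℂ := (-w₂ - d) / 2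
  have hl₁ : l₁ ^ 2 + w₂ * l₁ + w₁ = 0 := by linear_combination -hd / 4
  have hl₂ : l₂ ^ 2 + w₂ * l₂ + w₁ = 0 := by linear_combination -hd / 4
  have hmap : A.map (↑) = !![0, 1; -(l₁ * l₂), l₁ + l₂] := by
    rw [show l₁ * l₂ = w₁ by linear_combination hd / 4, show l₁ + l₂ = -w₂ by ring, hA]
    ext i j
    fin_cases i <;> fin_cases j <;> simp
  refine IsAsymptoticallyStable.of_map_ofReal ?_
  rw [hmap]
  exact isAsymptoticallyStable_companion (Complex.re_neg_of_sq_add_mul_add_eq_zero hw₂ hw₁ hl₁)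
    (Complex.re_neg_of_sq_add_mul_add_eq_zero hw₂ hw₁ hl₂)
end

section
/- Consider the damped torque-actuated pendulum with parameters g, l, m, r > 0, whose dynamics are ẋ₁ = x₂, ẋ₂ = −(g/l) sin(x₁) − (r/(m l²)) x₂ + u/(m l²). Fix a target angle ξ₁ ∈ ℝ and gains w₁, w₂ > 0, and apply the exact feedback-linearising control u(x₁, x₂) = m l² ((g/l) sin(x₁) + (r/(m l²)) x₂ + w₁ (ξ₁ − x₁) − w₂ x₂). Then every differentiable solution (x₁, x₂) : ℝ → ℝ² of the closed-loop system satisfies x₁(t) → ξ₁ and x₂(t) → 0 as t → ∞. -/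
open Filter Real

/-!
The control cancels the pendulum dynamics exactly, so `e = x₁ - ξ₁` solves the damped oscillator
`ë + w₂ ė + w₁ e = 0`. For it `V = 2 w₁ e² + ė² + (w₂ e + ė)²` is a strict Lyapunov function:
`V̇ = -2 w₂ (w₁ e² + ė²) ≤ -k V` for some `k > 0`, so `V` decays exponentially, and `V` dominates
both `e²` and `ė²`.
-/

theorem le_mul_exp_neg_of_hasDerivAt_le {f f' : ℝ → ℝ} {k : ℝ}
    (hf : ∀ t, HasDerivAt f (f' t) t) (hf' : ∀ t, f' t ≤ -k * f t) {t : ℝ} (ht : 0 ≤ t) :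
    f t ≤ f 0 * exp (-(k * t)) := by
  have hderiv : ∀ s, HasDerivAt (fun s => f s * exp (k * s))
      (f' s * exp (k * s) + f s * (exp (k * s) * k)) s := fun s =>
    (hf s).mul (by simpa using ((hasDerivAt_id s).const_mul k).exp)
  have hanti : Antitone fun s => f s * exp (k * s) :=
    antitone_of_deriv_nonpos (fun s => (hderiv s).differentiableAt) fun s => by
      rw [(hderiv s).deriv]
      nlinarith [hf' s, exp_pos (k * s)]
  have hbound := hanti ht
  simp only [mul_zero, exp_zero, mul_one] at hbound
  calc f t = f t * exp (k * t) * exp (-(k * t)) := by rw [mul_assoc, ← exp_add]; simp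
    _ ≤ f 0 * exp (-(k * t)) := by gcongr

theorem tendsto_zero_of_hasDerivAt_le_neg_mul {f f' : ℝ → ℝ} {k : ℝ} (hk : 0 < k)
    (hf : ∀ t, HasDerivAt f (f' t) t) (hf' : ∀ t, f' t ≤ -k * f t) (hf₀ : ∀ t, 0 ≤ f t) :
    Tendsto f atTop (nhds 0) := by
  have hexp : Tendsto (fun t => f 0 * exp (-(k * t))) atTop (nhds 0) := by
    simpa using (tendsto_exp_neg_atTop_nhds_zero.comp
      (tendsto_id.const_mul_atTop hk)).const_mul (f 0)
  refine squeeze_zero' (Eventually.of_forall hf₀) ?_ hexp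
  filter_upwards [eventually_ge_atTop 0] with t ht
  exact le_mul_exp_neg_of_hasDerivAt_le hf hf' ht

theorem tendsto_zero_of_mul_sq_le {α : Type*} {l : Filter α} {e V : α → ℝ} {c : ℝ} (hc : 0 < c)
    (hV : Tendsto V l (nhds 0)) (h : ∀ t, c * e t ^ 2 ≤ V t) : Tendsto e l (nhds 0) := by
  have hsqrt : Tendsto (fun t => √(V t / c)) l (nhds 0) := by
    simpa using (hV.div_const c).sqrt
  refine squeeze_zero_norm (fun t => ?_) hsqrt
  rw [Real.norm_eq_abs]
  exact Real.abs_le_sqrt (by rw [le_div_iff₀ hc]; linarith [h t])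

namespace DampedOscillator

variable (w₁ w₂ : ℝ)

def lyapunov (e v : ℝ) : ℝ :=
  2 * w₁ * e ^ 2 + v ^ 2 + (w₂ * e + v) ^ 2

theorem hasDerivAt_lyapunov {e v : ℝ → ℝ} (he : ∀ t, HasDerivAt e (v t) t)
    (hv : ∀ t, HasDerivAt v (-w₁ * e t - w₂ * v t) t) (t : ℝ) :
    HasDerivAt (fun t => lyapunov w₁ w₂ (e t) (v t))
      (-2 * w₂ * (w₁ * e t ^ 2 + v t ^ 2)) t := by
  have := ((((he t).fun_pow 2).const_mul (2 * w₁)).fun_add ((hv t).fun_pow 2)).fun_add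
    ((((he t).const_mul w₂).fun_add (hv t)).fun_pow 2)
  unfold lyapunov
  exact this.congr_deriv (by push_cast; ring)

variable {w₁ w₂}

theorem mul_sq_le_lyapunov (e v : ℝ) : 2 * w₁ * e ^ 2 ≤ lyapunov w₁ w₂ e v := by
  unfold lyapunov; nlinarith [sq_nonneg v, sq_nonneg (w₂ * e + v)]

theorem sq_le_lyapunov (hw₁ : 0 ≤ w₁) (e v : ℝ) : v ^ 2 ≤ lyapunov w₁ w₂ e v := by
  unfold lyapunov; nlinarith [mul_nonneg hw₁ (sq_nonneg e), sq_nonneg (w₂ * e + v)]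

theorem lyapunov_nonneg (hw₁ : 0 ≤ w₁) (e v : ℝ) : 0 ≤ lyapunov w₁ w₂ e v :=
  (sq_nonneg v).trans (sq_le_lyapunov hw₁ e v)

theorem decayRate_mul_lyapunov_le (hw₁ : 0 < w₁) (hw₂ : 0 < w₂) (e v : ℝ) :
    2 * w₁ * w₂ / (3 * w₁ + 2 * w₂ ^ 2) * lyapunov w₁ w₂ e v ≤
      2 * w₂ * (w₁ * e ^ 2 + v ^ 2) := by
  have key : w₁ * lyapunov w₁ w₂ e v ≤ (3 * w₁ + 2 * w₂ ^ 2) * (w₁ * e ^ 2 + v ^ 2) := by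
    unfold lyapunov
    nlinarith [mul_nonneg hw₁.le (sq_nonneg (w₂ * e - v)), sq_nonneg (w₁ * e), sq_nonneg (w₂ * v)]
  rw [div_mul_eq_mul_div, div_le_iff₀ (by positivity)]
  nlinarith [mul_le_mul_of_nonneg_left key (by positivity : (0 : ℝ) ≤ 2 * w₂)]

theorem tendsto_zero (hw₁ : 0 < w₁) (hw₂ : 0 < w₂) {e v : ℝ → ℝ}
    (he : ∀ t, HasDerivAt e (v t) t) (hv : ∀ t, HasDerivAt v (-w₁ * e t - w₂ * v t) t) :
    Tendsto e atTop (nhds 0) ∧ Tendsto v atTop (nhds 0) := by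
  have hV : Tendsto (fun t => lyapunov w₁ w₂ (e t) (v t)) atTop (nhds 0) :=
    tendsto_zero_of_hasDerivAt_le_neg_mul (k := 2 * w₁ * w₂ / (3 * w₁ + 2 * w₂ ^ 2))
      (by positivity) (hasDerivAt_lyapunov w₁ w₂ he hv)
      (fun t => by linarith [decayRate_mul_lyapunov_le hw₁ hw₂ (e t) (v t)])
      (fun t => lyapunov_nonneg hw₁.le _ _)
  exact ⟨tendsto_zero_of_mul_sq_le (by positivity) hV fun t => mul_sq_le_lyapunov _ _,
    tendsto_zero_of_mul_sq_le one_pos hV fun t => by simpa using sq_le_lyapunov hw₁.le (e t) (v t)⟩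

end DampedOscillator

theorem pendulum_feedback_linearised_attracting_general
    (g l m r : ℝ) (hl : 0 < l) (hm : 0 < m)
    (ξ₁ w₁ w₂ : ℝ) (hw₁ : 0 < w₁) (hw₂ : 0 < w₂)
    (u : ℝ → ℝ → ℝ)
    (hu : ∀ x₁ x₂, u x₁ x₂ =
      m * l ^ 2 * ((g / l) * Real.sin x₁ + (r / (m * l ^ 2)) * x₂
        + w₁ * (ξ₁ - x₁) - w₂ * x₂))
    (x₁ x₂ : ℝ → ℝ)
    (hx₁ : Differentiable ℝ x₁) (hx₂ : Differentiable ℝ x₂)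
    (hode₁ : ∀ t, deriv x₁ t = x₂ t)
    (hode₂ : ∀ t, deriv x₂ t =
      -(g / l) * Real.sin (x₁ t) - (r / (m * l ^ 2)) * x₂ t
        + u (x₁ t) (x₂ t) / (m * l ^ 2)) :
    Tendsto x₁ atTop (nhds ξ₁) ∧ Tendsto x₂ atTop (nhds 0) := by
  have hml : m * l ^ 2 ≠ 0 := by positivity
  have closed_loop : ∀ t, deriv x₂ t = -w₁ * (x₁ t - ξ₁) - w₂ * x₂ t := fun t => by
    rw [hode₂, hu]
    field_simp
    ring
  obtain ⟨he, hv⟩ := DampedOscillator.tendsto_zero hw₁ hw₂ (e := fun t => x₁ t - ξ₁) (v := x₂)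
    (fun t => by simpa [hode₁ t] using (hx₁ t).hasDerivAt.sub_const ξ₁)
    (fun t => closed_loop t ▸ (hx₂ t).hasDerivAt)
  exact ⟨by simpa using he.add_const ξ₁, hv⟩

/-- Feedback-linearised damped torque-actuated pendulum: under the exact
inversion control `u(x₁,x₂) = m l² ((g/l) sin x₁ + (r/(m l²)) x₂ + w₁(ξ₁ − x₁) − w₂ x₂)`,
every solution of the closed-loop dynamics satisfies
`x₁(t) → ξ₁` and `x₂(t) → 0` as `t → ∞`. -/
theorem pendulum_feedback_linearised_attracting
    (g l m r : ℝ) (hg : 0 < g) (hl : 0 < l) (hm : 0 < m) (hr : 0 < r)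
    (ξ₁ w₁ w₂ : ℝ) (hw₁ : 0 < w₁) (hw₂ : 0 < w₂)
    (u : ℝ → ℝ → ℝ)
    (hu : ∀ x₁ x₂, u x₁ x₂ =
      m * l ^ 2 * ((g / l) * Real.sin x₁ + (r / (m * l ^ 2)) * x₂
        + w₁ * (ξ₁ - x₁) - w₂ * x₂))
    (x₁ x₂ : ℝ → ℝ)
    (hx₁ : Differentiable ℝ x₁) (hx₂ : Differentiable ℝ x₂)
    (hode₁ : ∀ t, deriv x₁ t = x₂ t)
    (hode₂ : ∀ t, deriv x₂ t =
      -(g / l) * Real.sin (x₁ t) - (r / (m * l ^ 2)) * x₂ t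
        + u (x₁ t) (x₂ t) / (m * l ^ 2)) :
    Tendsto x₁ atTop (nhds ξ₁) ∧ Tendsto x₂ atTop (nhds 0) :=
  pendulum_feedback_linearised_attracting_general g l m r hl hm ξ₁ w₁ w₂ hw₁ hw₂ u hu x₁ x₂ hx₁ hx₂
    hode₁ hode₂
end
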